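/- The function u ↦ Φ(u) − u² is concave on ℝ. -/

import Mathlib

/-!
`Φ(u) - u²` is piecewise quadratic and `C¹`: with `a = u_* - 1/σ` and `k = u_* σ - 1`, the identity
`k (u_* - a) = a` makes the pieces meet to first order at `±a` (at `±u_*` they always do). Each
piece of the derivative is nonincreasing, and a continuous glueing of nonincreasing pieces is
nonincreasing, so the derivative is antitone and the function concave.
-/

/-- The adhesion potential `Φ` with threshold `u_*` (`us`) and slope parameter `σ`. -/
noncomputable def Phi (us σ : ℝ) (u : ℝ) : ℝ :=
  if |u| ≤ us - 1/σ then u^2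
  else if us - 1/σ ≤ u ∧ u ≤ us then us*(us - 1/σ) - (us*σ - 1)*(us - u)^2
  else if -us ≤ u ∧ u ≤ -us + 1/σ then us*(us - 1/σ) - (us*σ - 1)*(us + u)^2
  else us*(us - 1/σ)

open Set

theorem hasDerivAt_ite_le {p q p' q' : ℝ → ℝ} {c : ℝ}
    (hp : ∀ x, HasDerivAt p (p' x) x) (hq : ∀ x, HasDerivAt q (q' x) x)
    (hc : p c = q c) (hc' : p' c = q' c) (x : ℝ) :
    HasDerivAt (fun y => if y ≤ c then p y else q y) (if x ≤ c then p' x else q' x) x := by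
  rcases lt_trichotomy x c with hxc | rfl | hcx
  · rw [if_pos hxc.le]
    exact (hp x).congr_of_eventuallyEq <|
      Filter.eventuallyEq_of_mem (Iio_mem_nhds hxc) fun y hy => if_pos (le_of_lt hy)
  · rw [if_pos le_rfl, ← hasDerivWithinAt_univ, ← Iic_union_Ici]
    refine HasDerivWithinAt.union ?_ ?_
    · exact (hp x).hasDerivWithinAt.congr (fun y hy => if_pos hy) (if_pos le_rfl)
    · rw [hc']
      refine (hq x).hasDerivWithinAt.congr (fun y hy => ?_) (by rw [if_pos le_rfl, hc])
      split_ifs with hyx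
      · rw [le_antisymm hyx hy, hc]
      · rfl
  · rw [if_neg (not_le.2 hcx)]
    exact (hq x).congr_of_eventuallyEq <|
      Filter.eventuallyEq_of_mem (Ioi_mem_nhds hcx) fun y hy => if_neg (not_le.2 hy)

theorem Antitone.ite_le {α β : Type*} [LinearOrder α] [Preorder β] {p q : α → β} {c : α}
    (hp : Antitone p) (hq : Antitone q) (hc : q c ≤ p c) :
    Antitone fun x => if x ≤ c then p x else q x := by
  intro x y hxy
  dsimp only
  split_ifs with hy hx hx
  · exact hp hxy
  · exact absurd (hxy.trans hy) hx
  · exact (hq (le_of_not_ge hy)).trans (hc.trans (hp hx))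
  · exact hq hxy

theorem hasDerivAt_sub_mul_sq_sub_sq (c k m x : ℝ) :
    HasDerivAt (fun y => c - k * (y - m) ^ 2 - y ^ 2) (-2 * k * (x - m) - 2 * x) x :=
  ((((hasDerivAt_id' x).sub_const m).fun_pow 2).const_mul k).const_sub c
    |>.fun_sub (hasDerivAt_pow 2 x) |>.congr_deriv (by norm_num; ring)

section

variable {a b k : ℝ}

/-- `Φ(u) - u²` in the parameters `a = u_* - 1/σ`, `b = u_*`, `k = u_* σ - 1`. -/
noncomputable def phiSubSq (a b k u : ℝ) : ℝ :=
  if u ≤ -b then b * a - u ^ 2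
  else if u ≤ -a then b * a - k * (u + b) ^ 2 - u ^ 2
  else if u ≤ a then 0
  else if u ≤ b then b * a - k * (u - b) ^ 2 - u ^ 2
  else b * a - u ^ 2

noncomputable def phiSubSqDeriv (a b k u : ℝ) : ℝ :=
  if u ≤ -b then -2 * u
  else if u ≤ -a then -2 * k * (u + b) - 2 * u
  else if u ≤ a then 0
  else if u ≤ b then -2 * k * (u - b) - 2 * u
  else -2 * u

theorem hasDerivAt_phiSubSq (ha : 0 ≤ a) (hab : a ≤ b) (hk : k * (b - a) = a) (u : ℝ) :
    HasDerivAt (phiSubSq a b k) (phiSubSqDeriv a b k u) u := by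
  have hA (x : ℝ) : HasDerivAt (fun y => b * a - y ^ 2) (-2 * x) x :=
    (hasDerivAt_pow 2 x).const_sub (b * a) |>.congr_deriv (by norm_num)
  have hB (x : ℝ) : HasDerivAt (fun y => b * a - k * (y + b) ^ 2 - y ^ 2)
      (-2 * k * (x + b) - 2 * x) x := by
    simpa using hasDerivAt_sub_mul_sq_sub_sq (b * a) k (-b) x
  have hb := hasDerivAt_ite_le (hasDerivAt_sub_mul_sq_sub_sq (b * a) k b) hA (c := b)
    (by ring) (by ring)
  have ha' := hasDerivAt_ite_le (hasDerivAt_const · (0 : ℝ)) hb (c := a)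
    (by rw [if_pos hab]; linear_combination (b - a) * hk)
    (by rw [if_pos hab]; linear_combination -2 * hk)
  have hna := hasDerivAt_ite_le hB ha' (c := -a)
    (by rw [if_pos (by linarith)]; linear_combination -(b - a) * hk)
    (by rw [if_pos (by linarith)]; linear_combination -2 * hk)
  exact hasDerivAt_ite_le hA hna (c := -b)
    (by rw [if_pos (by linarith)]; ring) (by rw [if_pos (by linarith)]; ring) u

theorem antitone_phiSubSqDeriv (ha : 0 ≤ a) (hab : a ≤ b) (hk : k * (b - a) = a)
    (hk₁ : -1 ≤ k) : Antitone (phiSubSqDeriv a b k) := by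
  have hA : Antitone fun x : ℝ => -2 * x := fun x y h => by linarith
  have hB : Antitone fun x => -2 * k * (x + b) - 2 * x := fun x y h => by nlinarith
  have hC : Antitone fun x => -2 * k * (x - b) - 2 * x := fun x y h => by nlinarith
  have hb := hC.ite_le hA (c := b) (le_of_eq (by ring))
  have ha' := (antitone_const (c := (0 : ℝ))).ite_le hb (c := a) (by rw [if_pos hab]; linarith)
  have hna := hB.ite_le ha' (c := -a) (by rw [if_pos (by linarith)]; linarith)
  exact hA.ite_le hna (by rw [if_pos (by linarith)]; exact le_of_eq (by ring))

theorem concaveOn_phiSubSq (ha : 0 ≤ a) (hab : a ≤ b) (hk : k * (b - a) = a) (hk₁ : -1 ≤ k) :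
    ConcaveOn ℝ univ (phiSubSq a b k) := by
  have hderiv := hasDerivAt_phiSubSq ha hab hk
  refine Antitone.concaveOn_univ_of_deriv (fun u => (hderiv u).differentiableAt) ?_
  rw [funext fun u => (hderiv u).deriv]
  exact antitone_phiSubSqDeriv ha hab hk hk₁

end

theorem Phi_sub_sq_eq_phiSubSq {us σ : ℝ} (hσ : 0 < σ) (ha : 0 < us - 1 / σ) (u : ℝ) :
    Phi us σ u - u ^ 2 = phiSubSq (us - 1 / σ) us (us * σ - 1) u := by
  have hk : (us * σ - 1) * (us - (us - 1 / σ)) = us - 1 / σ := by field_simp; ring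
  have hab : us - 1 / σ < us := by simp [hσ]
  unfold Phi phiSubSq
  rw [show -us + 1 / σ = -(us - 1 / σ) by ring]
  generalize us - 1 / σ = a at *
  generalize us * σ - 1 = k at *
  simp only [abs_le]
  split_ifs
  all_goals try grind
  -- what is left are the points `u = -a`, `u = -u_*`, where the two definitions take different
  -- branches
  · obtain rfl : u = -a := by grind
    grind
  · obtain rfl : u = -us := by grind
    grind

theorem Phi_sub_sq_concave (us σ : ℝ) (hus : 0 < us) (hσ : 1 < σ * us) :
    ConcaveOn ℝ Set.univ (fun u : ℝ => Phi us σ u - u^2) := by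
  have hσ₀ : 0 < σ := pos_of_mul_pos_left (by linarith) hus.le
  have ha : 0 < us - 1 / σ := by rw [sub_pos, div_lt_iff₀ hσ₀]; linarith
  have hk : (us * σ - 1) * (us - (us - 1 / σ)) = us - 1 / σ := by field_simp; ring
  rw [funext (Phi_sub_sq_eq_phiSubSq hσ₀ ha)]
  exact concaveOn_phiSubSq ha.le (by linarith [one_div_pos.2 hσ₀]) hk (by nlinarith)
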